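/- Let h > 0, γ > 0 and x ∈ ℝ with |x| < h. Then ∫_0^∞ e^{−γt} · K(x,h,t) · p_t(0,x) dt = (2γ)^{−1/2} · ( e^{−√(2γ)|x|} + ( e^{√(2γ)x} + e^{−√(2γ)x} ) · Σ_{m=1}^∞ (−1)^m e^{−2mh√(2γ)} ). -/

import Mathlib

open MeasureTheory ProbabilityTheory Real Filter Set Topology

noncomputable section

/-- Gaussian transition density of standard Brownian motion. -/
def gaussP (t x y : ℝ) : ℝ := (Real.sqrt (2 * π * t))⁻¹ * Real.exp (-(y - x) ^ 2 / (2 * t))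

/-- The function `Δ(z,h,t)`. -/
def Delta (z h t : ℝ) : ℝ :=
  (Real.sqrt (2 * π * t))⁻¹ *
    ∑' m : ℤ,
      (Real.exp (-(z + 4 * (m : ℝ) * h) ^ 2 / (2 * t)) -
        Real.exp (-(z + 2 * h * (2 * (m : ℝ) + 1)) ^ 2 / (2 * t)))

/-- The Kolmogorov distribution function. -/
def kolF (x : ℝ) : ℝ := ∑' m : ℤ, (-1 : ℝ) ^ m * Real.exp (-2 * (m : ℝ) ^ 2 * x ^ 2)

/-- The function `K(x,h,t)`. -/
def Kfun (x h t : ℝ) : ℝ :=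
  ∑' m : ℤ, (-1 : ℝ) ^ m * Real.exp (-(2 * (m : ℝ) * h * ((m : ℝ) * h - x)) / t)

/-- Transition density of the 3-dimensional Bessel process. -/
def besselR (t x y : ℝ) : ℝ := (y / x) * (gaussP t x y - gaussP t x (-y))

/-- A standard Brownian motion: starts at `0`, a.s. continuous paths, independent
Gaussian increments. -/
structure IsStandardBM {Ω : Type*} [MeasurableSpace Ω] (P : Measure Ω) (W : ℝ → Ω → ℝ) :
    Prop where
  meas : ∀ t, Measurable (W t)
  init : ∀ᵐ ω ∂P, W 0 ω = 0
  cont : ∀ᵐ ω ∂P, Continuous fun t => W t ω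
  incr : ∀ s t : ℝ, 0 ≤ s → s ≤ t →
    P.map (fun ω => W t ω - W s ω) = gaussianReal 0 (Real.toNNReal (t - s))
  indep : ∀ (n : ℕ) (ts : ℕ → ℝ), (∀ i, 0 ≤ ts i) → Monotone ts →
    iIndepFun
      (fun i : Fin n => fun ω => W (ts (i + 1)) ω - W (ts i) ω) P

/-- The Brownian bridge from `0` to `y` of length `T`, built pathwise from `W`. -/
def bbridge {Ω : Type*} (T y : ℝ) (W : ℝ → Ω → ℝ) (t : ℝ) (ω : Ω) : ℝ :=
  if t < T then (1 - t / T) * W (T * t / (T - t)) ω + y * t / T else y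

/-- The first exit time from `(a,b)` before time `T` of the process `B`. -/
def exitTime {Ω : Type*} (T a b : ℝ) (B : ℝ → Ω → ℝ) (ω : Ω) : ℝ :=
  sInf {t | t ∈ Set.Icc 0 T ∧ B t ω ∉ Set.Ioo a b}


lemma cs_deriv (α β : ℝ) (u : ℝ) (hu : u ∈ Ioi (0:ℝ)) :
    HasDerivWithinAt (fun u : ℝ => α * u - β / u) (α + β / u ^ 2) (Ioi 0) u := by
  have hu0 : u ≠ 0 := ne_of_gt hu
  have h1 : HasDerivAt (fun u : ℝ => α * u - β / u) (α * 1 - (0 * u - β * 1) / u ^ 2) u :=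
    ((hasDerivAt_id u).const_mul α).sub ((hasDerivAt_const u β).div (hasDerivAt_id u) hu0)
  have : α * 1 - (0 * u - β * 1) / u ^ 2 = α + β / u ^ 2 := by ring
  exact (this ▸ h1).hasDerivWithinAt

lemma cs_injOn (α β : ℝ) (hα : 0 < α) (hβ : 0 ≤ β) :
    InjOn (fun u : ℝ => α * u - β / u) (Ioi 0) := by
  have hmono : StrictMonoOn (fun u : ℝ => α * u - β / u) (Ioi 0) := by
    intro u hu v hv huv
    simp only
    have h1 : α * u < α * v := by exact mul_lt_mul_of_pos_left huv hα
    have h2 : β / v ≤ β / u := by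
      apply div_le_div_of_nonneg_left hβ ?_ ?_ <;> first | exact hu | exact huv.le
    linarith
  exact hmono.injOn

lemma cs_image (α β : ℝ) (hα : 0 < α) (hβ : 0 < β) :
    (fun u : ℝ => α * u - β / u) '' (Ioi 0) = univ := by
  apply eq_univ_of_forall
  intro y
  have hs2 : Real.sqrt (y ^ 2 + 4 * α * β) ^ 2 = y ^ 2 + 4 * α * β :=
    Real.sq_sqrt (by positivity)
  set s := Real.sqrt (y ^ 2 + 4 * α * β) with hs
  have hsy : |y| < s := by
    have h0 : 0 ≤ s := Real.sqrt_nonneg _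
    nlinarith [abs_nonneg y, sq_abs y]
  have hys : 0 < y + s := by
    have : -y < s := by cases abs_lt.mp hsy; linarith
    linarith
  have hu0 : 0 < (y + s) / (2 * α) := by positivity
  refine ⟨(y + s) / (2 * α), hu0, ?_⟩
  have hne : (y + s) / (2 * α) ≠ 0 := ne_of_gt hu0
  have hys' : y + s ≠ 0 := ne_of_gt hys
  field_simp
  nlinarith [hs2]

lemma cs_contOn (α β : ℝ) :
    ContinuousOn (fun u : ℝ => Real.exp (-(α * u - β / u) ^ 2)) (Ioi 0) := by
  apply Real.continuous_exp.comp_continuousOn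
  apply ContinuousOn.neg
  apply ContinuousOn.pow
  exact (continuousOn_const.mul continuousOn_id).sub
    (continuousOn_const.div continuousOn_id (fun u hu => ne_of_gt hu))

lemma cs_J_integrable (α β : ℝ) (hα : 0 < α) (hβ : 0 < β) :
    IntegrableOn (fun u : ℝ =>
      |α + β / u ^ 2| • Real.exp (-(α * u - β / u) ^ 2)) (Ioi 0) := by
  rw [← integrableOn_image_iff_integrableOn_abs_deriv_smul measurableSet_Ioi
    (cs_deriv α β) (cs_injOn α β hα hβ.le) (fun w => Real.exp (-w ^ 2))]
  rw [cs_image α β hα hβ]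
  rw [IntegrableOn, Measure.restrict_univ]
  have := integrable_exp_neg_mul_sq (b := (1:ℝ)) one_pos
  simpa using this

lemma cs_integrable (α β : ℝ) (hα : 0 < α) (hβ : 0 ≤ β) :
    IntegrableOn (fun u : ℝ => Real.exp (-(α * u - β / u) ^ 2)) (Ioi 0) := by
  rcases eq_or_lt_of_le hβ with hβ0 | hβ0
  · have : (fun u : ℝ => Real.exp (-(α * u - β / u) ^ 2))
        = fun u : ℝ => Real.exp (-(α * u - β / u) ^ 2) := rfl
    apply (Integrable.integrableOn (f := fun u : ℝ => Real.exp (-(α * u - β / u) ^ 2)))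
    have h2 := integrable_exp_neg_mul_sq (b := α ^ 2) (by positivity)
    apply h2.congr
    filter_upwards with u
    rw [← hβ0]; ring_nf
  · have hJ := cs_J_integrable α β hα hβ0
    apply Integrable.mono (hJ.const_mul α⁻¹)
      ((cs_contOn α β).aestronglyMeasurable measurableSet_Ioi)
    rw [ae_restrict_iff' measurableSet_Ioi]
    filter_upwards with u hu
    have hu0 : 0 < u := hu
    have he : 0 < Real.exp (-(α * u - β / u) ^ 2) := Real.exp_pos _
    have hd : α ≤ α + β / u ^ 2 := by
      have : 0 ≤ β / u ^ 2 := by positivity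
      linarith
    rw [Real.norm_eq_abs, Real.norm_eq_abs, abs_of_pos he, smul_eq_mul]
    have habs : |α + β / u ^ 2| = α + β / u ^ 2 := abs_of_pos (by linarith)
    rw [abs_of_pos]
    · rw [habs]
      calc Real.exp (-(α * u - β / u) ^ 2)
          = α⁻¹ * (α * Real.exp (-(α * u - β / u) ^ 2)) := by field_simp
        _ ≤ α⁻¹ * ((α + β / u ^ 2) * Real.exp (-(α * u - β / u) ^ 2)) := by
            apply mul_le_mul_of_nonneg_left _ (by positivity)
            exact mul_le_mul_of_nonneg_right hd he.le
    · positivity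

lemma cs_integrable2 (α β : ℝ) (hα : 0 < α) (hβ : 0 < β) :
    IntegrableOn (fun u : ℝ => Real.exp (-(α * u - β / u) ^ 2) / u ^ 2) (Ioi 0) := by
  have hJ := cs_J_integrable α β hα hβ
  have hcont : ContinuousOn (fun u : ℝ => Real.exp (-(α * u - β / u) ^ 2) / u ^ 2) (Ioi 0) :=
    (cs_contOn α β).div (continuous_pow 2).continuousOn
      (fun u hu => pow_ne_zero 2 (ne_of_gt hu))
  apply Integrable.mono (hJ.const_mul β⁻¹) (hcont.aestronglyMeasurable measurableSet_Ioi)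
  rw [ae_restrict_iff' measurableSet_Ioi]
  filter_upwards with u hu
  have hu0 : 0 < u := hu
  have he : 0 < Real.exp (-(α * u - β / u) ^ 2) := Real.exp_pos _
  rw [Real.norm_eq_abs, Real.norm_eq_abs, smul_eq_mul,
    abs_of_pos (by positivity : (0:ℝ) < Real.exp (-(α * u - β / u) ^ 2) / u ^ 2),
    abs_of_pos (by positivity : (0:ℝ) < β⁻¹ * (|α + β / u ^ 2| * Real.exp (-(α * u - β / u) ^ 2)))]
  rw [abs_of_pos (by positivity : (0:ℝ) < α + β / u ^ 2)]
  rw [div_eq_mul_inv, mul_comm]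
  have h1 : (u ^ 2)⁻¹ ≤ β⁻¹ * (α + β / u ^ 2) := by
    rw [mul_add]
    have : β⁻¹ * (β / u ^ 2) = (u ^ 2)⁻¹ := by field_simp
    rw [this]
    have : 0 ≤ β⁻¹ * α := by positivity
    linarith
  calc (u ^ 2)⁻¹ * Real.exp (-(α * u - β / u) ^ 2)
      ≤ β⁻¹ * (α + β / u ^ 2) * Real.exp (-(α * u - β / u) ^ 2) :=
        mul_le_mul_of_nonneg_right h1 he.le
    _ = β⁻¹ * ((α + β / u ^ 2) * Real.exp (-(α * u - β / u) ^ 2)) := by ring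

lemma cs_integral (α β : ℝ) (hα : 0 < α) (hβ : 0 ≤ β) :
    ∫ u in Ioi (0:ℝ), Real.exp (-(α * u - β / u) ^ 2) = Real.sqrt π / (2 * α) := by
  rcases eq_or_lt_of_le hβ with hβ0 | hβ0
  · have he : EqOn (fun u : ℝ => Real.exp (-(α * u - β / u) ^ 2))
        (fun u : ℝ => Real.exp (-(α ^ 2) * u ^ 2)) (Ioi 0) := by
      intro u _; simp only; rw [← hβ0]; ring_nf
    rw [setIntegral_congr_fun measurableSet_Ioi he, integral_gaussian_Ioi]
    rw [Real.sqrt_div pi_pos.le, Real.sqrt_sq hα.le]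
    ring
  · set g : ℝ → ℝ := fun u => Real.exp (-(α * u - β / u) ^ 2) with hg
    have key := integral_image_eq_integral_abs_deriv_smul measurableSet_Ioi
      (cs_deriv α β) (cs_injOn α β hα hβ) (fun w => Real.exp (-w ^ 2))
    rw [cs_image α β hα hβ0, Measure.restrict_univ] at key
    have hgauss : (∫ w : ℝ, Real.exp (-w ^ 2)) = Real.sqrt π := by
      have := integral_gaussian (1 : ℝ)
      simpa using this
    -- I2
    have hφd : ∀ v ∈ Ioi (0:ℝ), HasDerivWithinAt (fun v : ℝ => β / (α * v))
        (-(β * α) / (α * v) ^ 2) (Ioi 0) v := by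
      intro v hv
      have hv0 : (0:ℝ) < v := hv
      have h1 : HasDerivAt (fun v : ℝ => β / (α * v))
          ((0 * (α * v) - β * (α * 1)) / (α * v) ^ 2) v :=
        (hasDerivAt_const v β).div ((hasDerivAt_id v).const_mul α)
          (mul_ne_zero (ne_of_gt hα) (ne_of_gt hv0))
      have h2 : (0 * (α * v) - β * (α * 1)) / (α * v) ^ 2 = -(β * α) / (α * v) ^ 2 := by ring
      exact (h2 ▸ h1).hasDerivWithinAt
    have hφinj : InjOn (fun v : ℝ => β / (α * v)) (Ioi 0) := by
      apply StrictAntiOn.injOn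
      intro a ha b hb hab
      have ha0 : (0:ℝ) < a := ha
      exact div_lt_div_of_pos_left hβ0 (mul_pos hα ha0) (mul_lt_mul_of_pos_left hab hα)
    have hφim : (fun v : ℝ => β / (α * v)) '' (Ioi 0) = Ioi 0 := by
      ext y
      constructor
      · rintro ⟨v, hv, rfl⟩
        have hv0 : (0:ℝ) < v := hv
        exact mem_Ioi.mpr (div_pos hβ0 (mul_pos hα hv0))
      · intro hy
        have hy0 : (0:ℝ) < y := hy
        exact ⟨β / (α * y), mem_Ioi.mpr (div_pos hβ0 (mul_pos hα hy0)), by field_simp⟩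
    have key2 := integral_image_eq_integral_abs_deriv_smul measurableSet_Ioi
      hφd hφinj (fun u => g u / u ^ 2)
    rw [hφim] at key2
    have hI2 : ∫ u in Ioi (0:ℝ), g u / u ^ 2 = ∫ u in Ioi (0:ℝ), (α / β) * g u := by
      rw [key2]
      apply setIntegral_congr_fun measurableSet_Ioi
      intro v hv
      have hv0 : (0:ℝ) < v := hv
      simp only
      have hgφ : g (β / (α * v)) = g v := by
        simp only [hg]
        congr 1
        have h3 : α * (β / (α * v)) - β / (β / (α * v)) = -(α * v - β / v) := by
          field_simp
          ring
        rw [h3]; ring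
      rw [hgφ, smul_eq_mul]
      rw [abs_of_nonpos (div_nonpos_of_nonpos_of_nonneg (neg_nonpos.mpr (by positivity)) (by positivity))]
      field_simp
    have hg_int := cs_integrable α β hα hβ
    have hg2_int := cs_integrable2 α β hα hβ0
    have hsplit : ∫ u in Ioi (0:ℝ), |α + β / u ^ 2| • g u
        = α * (∫ u in Ioi (0:ℝ), g u) + β * (∫ u in Ioi (0:ℝ), g u / u ^ 2) := by
      have e1 : EqOn (fun u : ℝ => |α + β / u ^ 2| • g u)
          (fun u : ℝ => α * g u + β * (g u / u ^ 2)) (Ioi 0) := by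
        intro u hu
        have hu0 : (0:ℝ) < u := hu
        simp only
        rw [smul_eq_mul, abs_of_pos (by positivity : (0:ℝ) < α + β / u ^ 2)]
        field_simp
      rw [setIntegral_congr_fun measurableSet_Ioi e1,
        integral_add (hg_int.const_mul α) (hg2_int.const_mul β),
        integral_const_mul, integral_const_mul]
    have hβne : β ≠ 0 := ne_of_gt hβ0
    have hI2' : ∫ u in Ioi (0:ℝ), g u / u ^ 2 = (α / β) * ∫ u in Ioi (0:ℝ), g u := by
      rw [hI2, integral_const_mul]
    have hπ : Real.sqrt π = ∫ u in Ioi (0:ℝ), |α + β / u ^ 2| • g u := by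
      rw [← hgauss]; exact key
    have h2 : Real.sqrt π = 2 * α * ∫ u in Ioi (0:ℝ), g u := by
      rw [hπ, hsplit, hI2']; field_simp; ring
    rw [eq_div_iff (by positivity : (2 * α : ℝ) ≠ 0)]
    linarith [h2]

lemma laplace_contOn (γ a : ℝ) :
    ContinuousOn (fun t : ℝ =>
      Real.exp (-γ * t) * ((Real.sqrt (2 * π * t))⁻¹ * Real.exp (-a ^ 2 / (2 * t)))) (Ioi 0) := by
  apply ContinuousOn.mul
  · exact (Real.continuous_exp.comp (continuous_const.mul continuous_id)).continuousOn
  apply ContinuousOn.mul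
  · apply ContinuousOn.inv₀
    · exact (Real.continuous_sqrt.comp (continuous_const.mul continuous_id)).continuousOn
    · intro t ht
      have ht0 : (0:ℝ) < t := ht
      exact ne_of_gt (Real.sqrt_pos.mpr (by positivity))
  · apply Real.continuous_exp.comp_continuousOn
    exact continuousOn_const.div (continuous_const.mul continuous_id).continuousOn
      (fun t ht => mul_ne_zero two_ne_zero (ne_of_gt ht))

lemma sq_deriv : ∀ u ∈ Ioi (0:ℝ), HasDerivWithinAt (fun u : ℝ => u ^ 2) (2 * u) (Ioi 0) u := by
  intro u _
  simpa using (hasDerivAt_pow 2 u).hasDerivWithinAt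

lemma sq_injOn : InjOn (fun u : ℝ => u ^ 2) (Ioi 0) := by
  intro a ha b hb hab
  have ha0 : (0:ℝ) < a := ha
  have hb0 : (0:ℝ) < b := hb
  simp only at hab
  rw [← Real.sqrt_sq ha0.le, ← Real.sqrt_sq hb0.le, hab]

lemma sq_image : (fun u : ℝ => u ^ 2) '' (Ioi 0) = Ioi 0 := by
  ext y; constructor
  · rintro ⟨u, hu, rfl⟩
    have : (0:ℝ) < u := hu
    exact mem_Ioi.mpr (by positivity)
  · intro hy
    have hy0 : (0:ℝ) < y := hy
    exact ⟨Real.sqrt y, mem_Ioi.mpr (Real.sqrt_pos.mpr hy0), Real.sq_sqrt hy0.le⟩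

lemma laplace_eqOn (γ a : ℝ) (hγ : 0 < γ) :
    EqOn (fun u : ℝ => |2 * u| • ((fun t : ℝ =>
        Real.exp (-γ * t) * ((Real.sqrt (2 * π * t))⁻¹ * Real.exp (-a ^ 2 / (2 * t)))) (u ^ 2)))
      (fun u : ℝ => (2 * (Real.sqrt (2 * π))⁻¹ * Real.exp (-Real.sqrt (2 * γ) * |a|)) *
        Real.exp (-(Real.sqrt γ * u - (|a| / Real.sqrt 2) / u) ^ 2)) (Ioi 0) := by
  intro u hu
  have hu0 : (0:ℝ) < u := hu
  simp only [smul_eq_mul]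
  have h2π : Real.sqrt (2 * π * u ^ 2) = Real.sqrt (2 * π) * u := by
    rw [Real.sqrt_mul (by positivity) (u ^ 2), Real.sqrt_sq hu0.le]
  rw [abs_of_pos (by positivity : (0:ℝ) < 2 * u), h2π, mul_inv]
  have hexp : Real.exp (-γ * u ^ 2) * Real.exp (-a ^ 2 / (2 * u ^ 2))
      = Real.exp (-Real.sqrt (2 * γ) * |a|) *
        Real.exp (-(Real.sqrt γ * u - (|a| / Real.sqrt 2) / u) ^ 2) := by
    rw [← Real.exp_add, ← Real.exp_add]
    congr 1
    have hs2 : Real.sqrt 2 ^ 2 = 2 := Real.sq_sqrt (by norm_num)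
    have hsγ : Real.sqrt γ ^ 2 = γ := Real.sq_sqrt hγ.le
    have hs2γ : Real.sqrt (2 * γ) = Real.sqrt 2 * Real.sqrt γ := Real.sqrt_mul (by norm_num) γ
    have ha2 : |a| ^ 2 = a ^ 2 := sq_abs a
    have h2ne : Real.sqrt 2 ≠ 0 := by positivity
    have h22 : Real.sqrt 2 * Real.sqrt 2 = 2 := by nlinarith [hs2]
    have hune : u ≠ 0 := ne_of_gt hu0
    set b : ℝ := |a| / Real.sqrt 2 with hb
    have hb2 : b ^ 2 = a ^ 2 / 2 := by
      rw [hb, div_pow, ha2, hs2]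
    have h2b : 2 * Real.sqrt γ * b = Real.sqrt (2 * γ) * |a| := by
      rw [hb, hs2γ]
      have hd : 2 * Real.sqrt γ * (|a| / Real.sqrt 2)
          = (2 * Real.sqrt γ * |a|) / Real.sqrt 2 := by ring
      rw [hd, div_eq_iff h2ne]
      linear_combination -Real.sqrt γ * |a| * h22
    have expand : (Real.sqrt γ * u - b / u) ^ 2
        = γ * u ^ 2 - 2 * Real.sqrt γ * b + b ^ 2 / u ^ 2 := by
      have h1 : (Real.sqrt γ * u - b / u) ^ 2
          = Real.sqrt γ ^ 2 * u ^ 2 - 2 * Real.sqrt γ * (u * (b / u)) + (b / u) ^ 2 := by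
        ring
      rw [h1, hsγ, div_pow]
      congr 2
      field_simp
    rw [expand, hb2]
    linear_combination -h2b
  have hune : u ≠ 0 := ne_of_gt hu0
  linear_combination (2 * (Real.sqrt (2 * π))⁻¹) * hexp +
    (2 * (Real.sqrt (2 * π))⁻¹ * (Real.exp (-γ * u ^ 2) * Real.exp (-a ^ 2 / (2 * u ^ 2)))) *
      (mul_inv_cancel₀ hune)


lemma laplace_integrable (γ a : ℝ) (hγ : 0 < γ) :
    IntegrableOn (fun t : ℝ =>
      Real.exp (-γ * t) * ((Real.sqrt (2 * π * t))⁻¹ * Real.exp (-a ^ 2 / (2 * t)))) (Ioi 0) := by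
  rw [← sq_image, integrableOn_image_iff_integrableOn_abs_deriv_smul measurableSet_Ioi
    sq_deriv sq_injOn]
  apply IntegrableOn.congr_fun ?_ (laplace_eqOn γ a hγ).symm measurableSet_Ioi
  exact (cs_integrable (Real.sqrt γ) (|a| / Real.sqrt 2)
    (Real.sqrt_pos.mpr hγ) (by positivity)).const_mul _

lemma laplace_value (γ a : ℝ) (hγ : 0 < γ) :
    (∫ t in Ioi (0:ℝ),
        Real.exp (-γ * t) * ((Real.sqrt (2 * π * t))⁻¹ * Real.exp (-a ^ 2 / (2 * t))))
      = (Real.sqrt (2 * γ))⁻¹ * Real.exp (-Real.sqrt (2 * γ) * |a|) := by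
  have key := integral_image_eq_integral_abs_deriv_smul measurableSet_Ioi sq_deriv sq_injOn
    (fun t => Real.exp (-γ * t) * ((Real.sqrt (2 * π * t))⁻¹ * Real.exp (-a ^ 2 / (2 * t))))
  rw [sq_image] at key
  rw [key, setIntegral_congr_fun measurableSet_Ioi (laplace_eqOn γ a hγ), integral_const_mul,
    cs_integral (Real.sqrt γ) (|a| / Real.sqrt 2) (Real.sqrt_pos.mpr hγ) (by positivity)]
  have h2γ : Real.sqrt (2 * γ) = Real.sqrt 2 * Real.sqrt γ := Real.sqrt_mul (by norm_num) γ
  have h2π : Real.sqrt (2 * π) = Real.sqrt 2 * Real.sqrt π := Real.sqrt_mul (by norm_num) π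
  have hπ0 : Real.sqrt π ≠ 0 := by positivity
  have hγ0 : Real.sqrt γ ≠ 0 := ne_of_gt (Real.sqrt_pos.mpr hγ)
  have h20 : Real.sqrt 2 ≠ 0 := by positivity
  rw [h2γ, h2π]
  field_simp

lemma summable_absK (c h x : ℝ) (hc : 0 < c) (hh : 0 < h) :
    Summable (fun m : ℤ => Real.exp (-c * |x - 2 * (m : ℝ) * h|)) := by
  have hq1 : Real.exp (-(2 * h * c)) < 1 := Real.exp_lt_one_iff.mpr (by nlinarith)
  have hgeo : Summable (fun n : ℕ => Real.exp (c * |x|) * Real.exp (-(2 * h * c)) ^ n) :=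
    (summable_geometric_of_lt_one (Real.exp_nonneg _) hq1).mul_left _
  apply Summable.of_nat_of_neg_add_one
  · apply hgeo.of_nonneg_of_le (fun n => (Real.exp_pos _).le)
    intro n
    rw [← Real.exp_nat_mul, ← Real.exp_add]
    apply Real.exp_le_exp.mpr
    push_cast
    have h1 : 2 * (n : ℝ) * h - |x| ≤ |x - 2 * (n : ℝ) * h| := by
      have h2 : |(2 * (n : ℝ) * h)| - |x| ≤ |2 * (n : ℝ) * h - x| := abs_sub_abs_le_abs_sub _ _
      rw [abs_of_nonneg (by positivity : (0:ℝ) ≤ 2 * (n : ℝ) * h)] at h2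
      rw [abs_sub_comm] at h2
      exact h2
    have h3 := mul_le_mul_of_nonneg_left h1 hc.le
    nlinarith [h3]
  · apply hgeo.of_nonneg_of_le (fun n => (Real.exp_pos _).le)
    intro n
    rw [← Real.exp_nat_mul, ← Real.exp_add]
    apply Real.exp_le_exp.mpr
    have hcast : ((-(n + 1) : ℤ) : ℝ) = -((n : ℝ) + 1) := by push_cast; ring
    rw [hcast]
    have h1 : 2 * ((n : ℝ) + 1) * h - |x| ≤ |x - 2 * (-((n : ℝ) + 1)) * h| := by
      have h2 := abs_sub_abs_le_abs_sub (2 * ((n : ℝ) + 1) * h) (-x)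
      rw [abs_neg] at h2
      rw [abs_of_nonneg (by positivity : (0:ℝ) ≤ 2 * ((n : ℝ) + 1) * h)] at h2
      have h4 : x - 2 * (-((n : ℝ) + 1)) * h = 2 * ((n : ℝ) + 1) * h - -x := by ring
      rw [h4]
      exact h2
    have h3 := mul_le_mul_of_nonneg_left h1 hc.le
    have hn : (0:ℝ) ≤ (n : ℝ) := Nat.cast_nonneg n
    nlinarith [h3]

lemma eval_S (c h x : ℝ) (hc : 0 < c) (hh : 0 < h) (hx : |x| < h) :
    ∑' m : ℤ, (-1 : ℝ) ^ m * Real.exp (-c * |x - 2 * (m : ℝ) * h|)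
      = Real.exp (-c * |x|) + (Real.exp (c * x) + Real.exp (-c * x)) *
          ∑' m : ℕ, (-1 : ℝ) ^ (m + 1) * Real.exp (-2 * ((m : ℝ) + 1) * h * c) := by
  have hxa := abs_lt.mp hx
  set q := Real.exp (-(2 * h * c)) with hqdef
  have hq1 : q < 1 := Real.exp_lt_one_iff.mpr (by nlinarith)
  have hq0 : 0 < q := Real.exp_pos _
  have hterm : ∀ m : ℕ, (-1 : ℝ) ^ (m + 1) * Real.exp (-2 * ((m : ℝ) + 1) * h * c)
      = (-q) ^ (m + 1) := by
    intro m
    have hnp : (-q) ^ (m + 1) = (-1 : ℝ) ^ (m + 1) * q ^ (m + 1) := by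
      rw [neg_eq_neg_one_mul, mul_pow]
    rw [hnp, hqdef, ← Real.exp_nat_mul]
    congr 2
    push_cast
    ring
  have hsumm : Summable (fun m : ℕ => (-1 : ℝ) ^ (m + 1) * Real.exp (-2 * ((m : ℝ) + 1) * h * c)) := by
    apply Summable.congr _ (fun m => (hterm m).symm)
    have hgeo : Summable (fun m : ℕ => (-q) ^ m) := by
      apply summable_geometric_of_norm_lt_one
      rw [norm_neg, Real.norm_eq_abs, abs_of_pos hq0]
      exact hq1
    exact (hgeo.mul_left (-q)).congr (fun m => by rw [pow_succ]; ring)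
  set T := ∑' m : ℕ, (-1 : ℝ) ^ (m + 1) * Real.exp (-2 * ((m : ℝ) + 1) * h * c) with hTdef
  have hT : HasSum (fun m : ℕ => (-1 : ℝ) ^ (m + 1) * Real.exp (-2 * ((m : ℝ) + 1) * h * c)) T :=
    hsumm.hasSum
  set g : ℤ → ℝ := fun m => (-1 : ℝ) ^ m * Real.exp (-c * |x - 2 * (m : ℝ) * h|) with hgdef
  have h1 : HasSum (fun n : ℕ => g (↑(n + 1))) (Real.exp (c * x) * T) := by
    have h2 := hT.mul_left (Real.exp (c * x))
    have hfe : (fun n : ℕ => Real.exp (c * x) *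
          ((-1 : ℝ) ^ (n + 1) * Real.exp (-2 * ((n : ℝ) + 1) * h * c)))
        = fun n : ℕ => g (↑(n + 1)) := by
      funext n
      rw [hgdef]
      simp only [zpow_natCast, Int.cast_natCast]
      have habs : |x - 2 * ((n : ℝ) + 1) * h| = 2 * ((n : ℝ) + 1) * h - x := by
        rw [abs_of_nonpos (by nlinarith [Nat.cast_nonneg (α := ℝ) n])]
        ring
      have hcast : ((n + 1 : ℕ) : ℝ) = (n : ℝ) + 1 := by push_cast; ring
      have hprod : Real.exp (c * x) * Real.exp (-2 * ((n : ℝ) + 1) * h * c)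
          = Real.exp (-c * (2 * ((n : ℝ) + 1) * h - x)) := by
        rw [← Real.exp_add]; congr 1; ring
      rw [hcast, habs]
      linear_combination ((-1 : ℝ) ^ (n + 1)) * hprod
    rw [← hfe]
    exact h2
  have h2 : HasSum (fun n : ℕ => g ↑n) (Real.exp (c * x) * T + Real.exp (-c * |x|)) := by
    have h3 := (hasSum_nat_add_iff (f := fun n : ℕ => g ↑n) 1).mp h1
    simp only [Finset.range_one, Finset.sum_singleton] at h3
    have hg0 : g ((0 : ℕ) : ℤ) = Real.exp (-c * |x|) := by
      rw [hgdef]; norm_num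
    rwa [hg0] at h3
  have hneg : HasSum (fun n : ℕ => g (-(↑n + 1))) (Real.exp (-c * x) * T) := by
    have h4 := hT.mul_left (Real.exp (-c * x))
    have hfe : (fun n : ℕ => Real.exp (-c * x) *
          ((-1 : ℝ) ^ (n + 1) * Real.exp (-2 * ((n : ℝ) + 1) * h * c)))
        = fun n : ℕ => g (-(↑n + 1)) := by
      funext n
      rw [hgdef]
      simp only
      have hsgn : ((-1 : ℝ)) ^ (-((n : ℤ) + 1)) = (-1 : ℝ) ^ (n + 1) := by
        rw [zpow_neg, show ((n : ℤ) + 1) = ((n + 1 : ℕ) : ℤ) by push_cast; ring,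
          zpow_natCast, ← inv_pow]
        norm_num
      have hcast : ((-((n : ℤ) + 1) : ℤ) : ℝ) = -((n : ℝ) + 1) := by push_cast; ring
      have habs : |x - 2 * (-((n : ℝ) + 1)) * h| = x + 2 * ((n : ℝ) + 1) * h := by
        rw [show x - 2 * (-((n : ℝ) + 1)) * h = x + 2 * ((n : ℝ) + 1) * h by ring]
        exact abs_of_nonneg (by nlinarith [Nat.cast_nonneg (α := ℝ) n])
      have hprod : Real.exp (-c * x) * Real.exp (-2 * ((n : ℝ) + 1) * h * c)
          = Real.exp (-c * (x + 2 * ((n : ℝ) + 1) * h)) := by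
        rw [← Real.exp_add]; congr 1; ring
      rw [hsgn, hcast, habs]
      linear_combination ((-1 : ℝ) ^ (n + 1)) * hprod
    rw [← hfe]
    exact h4
  have htot := h2.of_nat_of_neg_add_one hneg
  rw [htot.tsum_eq]
  ring

/-- the Laplace transform of `t ↦ K(x,h,t)·p_t(0,x)`. -/
theorem stmt_10 (h γ x : ℝ) (hh : 0 < h) (hγ : 0 < γ) (hx : |x| < h) :
    ∫ t in Set.Ioi (0 : ℝ), Real.exp (-γ * t) * Kfun x h t * gaussP t 0 x =
      (Real.sqrt (2 * γ))⁻¹ *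
        (Real.exp (-Real.sqrt (2 * γ) * |x|) +
          (Real.exp (Real.sqrt (2 * γ) * x) + Real.exp (-Real.sqrt (2 * γ) * x)) *
            ∑' m : ℕ, (-1 : ℝ) ^ (m + 1) *
              Real.exp (-2 * ((m : ℝ) + 1) * h * Real.sqrt (2 * γ))) := by
  have hc : 0 < Real.sqrt (2 * γ) := Real.sqrt_pos.mpr (by linarith)
  set F : ℤ → ℝ → ℝ := fun m t => ((-1 : ℝ) ^ m) *
    (Real.exp (-γ * t) * ((Real.sqrt (2 * π * t))⁻¹ *
      Real.exp (-(x - 2 * (m : ℝ) * h) ^ 2 / (2 * t)))) with hF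
  have step1 : EqOn (fun t => Real.exp (-γ * t) * Kfun x h t * gaussP t 0 x)
      (fun t => ∑' m : ℤ, F m t) (Ioi 0) := by
    intro t ht
    have ht0 : (0 : ℝ) < t := ht
    have htne : t ≠ 0 := ne_of_gt ht0
    simp only [Kfun, gaussP]
    rw [mul_assoc, ← tsum_mul_right, ← tsum_mul_left]
    apply tsum_congr
    intro m
    rw [hF]
    simp only
    have hE : Real.exp (-(2 * (m : ℝ) * h * ((m : ℝ) * h - x)) / t) *
          Real.exp (-(x - 0) ^ 2 / (2 * t))
        = Real.exp (-(x - 2 * (m : ℝ) * h) ^ 2 / (2 * t)) := by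
      rw [← Real.exp_add]
      congr 1
      field_simp
      ring
    linear_combination ((-1 : ℝ) ^ m * Real.exp (-γ * t) * (Real.sqrt (2 * π * t))⁻¹) * hE
  rw [setIntegral_congr_fun measurableSet_Ioi step1]
  have hmeas : ∀ m : ℤ, AEStronglyMeasurable (F m) (volume.restrict (Ioi 0)) := fun m =>
    (continuousOn_const.mul (laplace_contOn γ (x - 2 * (m : ℝ) * h))).aestronglyMeasurable
      measurableSet_Ioi
  have hint : ∀ m : ℤ, IntegrableOn (F m) (Ioi 0) := fun m =>
    (laplace_integrable γ (x - 2 * (m : ℝ) * h) hγ).const_mul _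
  have hnorm : ∀ (m : ℤ) (t : ℝ), ‖F m t‖ = Real.exp (-γ * t) *
      ((Real.sqrt (2 * π * t))⁻¹ * Real.exp (-(x - 2 * (m : ℝ) * h) ^ 2 / (2 * t))) := by
    intro m t
    rw [hF]
    simp only [Real.norm_eq_abs]
    have h1 : |(-1 : ℝ) ^ m| = 1 := by
      rcases Int.even_or_odd m with he | ho
      · rw [he.neg_one_zpow]; norm_num
      · rw [ho.neg_one_zpow]; norm_num
    rw [abs_mul, h1, one_mul, abs_of_nonneg (by positivity)]
  have hlint : ∀ m : ℤ, (∫⁻ t in Ioi (0:ℝ), ‖F m t‖ₑ)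
      = ENNReal.ofReal ((Real.sqrt (2 * γ))⁻¹ *
          Real.exp (-Real.sqrt (2 * γ) * |x - 2 * (m : ℝ) * h|)) := by
    intro m
    rw [← ofReal_integral_norm_eq_lintegral_enorm (hint m)]
    congr 1
    simp only [hnorm m]
    exact laplace_value γ _ hγ
  have hne : (∑' m : ℤ, ∫⁻ t in Ioi (0:ℝ), ‖F m t‖ₑ) ≠ ⊤ := by
    rw [tsum_congr hlint, ← ENNReal.ofReal_tsum_of_nonneg (fun m => by positivity)
      ((summable_absK (Real.sqrt (2 * γ)) h x hc hh).mul_left _)]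
    exact ENNReal.ofReal_ne_top
  rw [MeasureTheory.integral_tsum hmeas hne]
  have hval : ∀ m : ℤ, (∫ t in Ioi (0:ℝ), F m t) = (Real.sqrt (2 * γ))⁻¹ *
      ((-1 : ℝ) ^ m * Real.exp (-Real.sqrt (2 * γ) * |x - 2 * (m : ℝ) * h|)) := by
    intro m
    rw [hF]
    simp only
    rw [integral_const_mul, laplace_value γ _ hγ]
    ring
  rw [tsum_congr hval, tsum_mul_left, eval_S (Real.sqrt (2 * γ)) h x hc hh hx]
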